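/- arXiv:2205.09291 — 5 statements merged into one kernel-verified Lean document; each statement's English description precedes it below -/
import Mathlib

section
/- For every integer n ≥ 2, the difference between the n-th harmonic number and log n satisfies γ + 1/(2(n+1)) < (∑_{k=1}^n 1/k) - log n < γ + 1/(2(n-1)), where γ is the Euler–Mascheroni constant. -/
open Real Finset Filter Topology

/-- Padé lower bound for `log (1 + x)`. -/
lemma aux_log_lower {x : ℝ} (hx : 0 < x) : 2 * x / (2 + x) < Real.log (1 + x) := by
  have hd : ∀ t : ℝ, 0 ≤ t →
      HasDerivAt (fun t : ℝ => Real.log (1 + t) - 2 * t / (2 + t))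
        (t ^ 2 / ((1 + t) * (2 + t) ^ 2)) t := by
    intro t ht
    have h1 : (1 : ℝ) + t > 0 := by linarith
    have h2 : (2 : ℝ) + t > 0 := by linarith
    have hlog : HasDerivAt (fun t : ℝ => Real.log (1 + t)) (1 / (1 + t)) t := by
      simpa using (((hasDerivAt_id t).const_add 1).log h1.ne')
    have hrat : HasDerivAt (fun t : ℝ => 2 * t / (2 + t))
        ((2 * 1 * (2 + t) - 2 * t * 1) / (2 + t) ^ 2) t := by
      simpa using ((hasDerivAt_id t).const_mul 2).fun_div ((hasDerivAt_id t).const_add 2) h2.ne'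
    have := hlog.fun_sub hrat
    refine this.congr_deriv ?_
    field_simp
    try ring
  have hmono : StrictMonoOn (fun t : ℝ => Real.log (1 + t) - 2 * t / (2 + t)) (Set.Ici 0) := by
    apply strictMonoOn_of_deriv_pos (convex_Ici 0)
    · exact fun t ht => (hd t ht).continuousAt.continuousWithinAt
    · intro t ht
      rw [interior_Ici] at ht
      rw [(hd t ht.le).deriv]
      have ht' : (0:ℝ) < t := ht
      have h1 : (1 : ℝ) + t > 0 := by linarith
      have h2 : (2 : ℝ) + t > 0 := by linarith
      positivity
  have := hmono (Set.self_mem_Ici) (Set.mem_Ici.2 hx.le) hx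
  simpa using this

/-- Padé upper bound for `log (1 + x)`. -/
lemma aux_log_upper {x : ℝ} (hx : 0 < x) : Real.log (1 + x) < x * (2 + x) / (2 * (1 + x)) := by
  have hd : ∀ t : ℝ, 0 ≤ t →
      HasDerivAt (fun t : ℝ => t * (2 + t) / (2 * (1 + t)) - Real.log (1 + t))
        (t ^ 2 / (2 * (1 + t) ^ 2)) t := by
    intro t ht
    have h1 : (1 : ℝ) + t > 0 := by linarith
    have hlog : HasDerivAt (fun t : ℝ => Real.log (1 + t)) (1 / (1 + t)) t := by
      simpa using (((hasDerivAt_id t).const_add 1).log h1.ne')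
    have hnum : HasDerivAt (fun t : ℝ => t * (2 + t)) (1 * (2 + t) + t * 1) t :=
      (hasDerivAt_id t).mul ((hasDerivAt_id t).const_add 2)
    have hden : HasDerivAt (fun t : ℝ => 2 * (1 + t)) 2 t := by
      simpa using ((hasDerivAt_id t).const_add 1).const_mul 2
    have hrat := hnum.fun_div hden (by positivity)
    have := hrat.fun_sub hlog
    refine this.congr_deriv ?_
    field_simp
    try ring
  have hmono : StrictMonoOn
      (fun t : ℝ => t * (2 + t) / (2 * (1 + t)) - Real.log (1 + t)) (Set.Ici 0) := by
    apply strictMonoOn_of_deriv_pos (convex_Ici 0)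
    · exact fun t ht => (hd t ht).continuousAt.continuousWithinAt
    · intro t ht
      rw [interior_Ici] at ht
      rw [(hd t ht.le).deriv]
      have ht' : (0:ℝ) < t := ht
      have h1 : (1 : ℝ) + t > 0 := by linarith
      positivity
  have := hmono (Set.self_mem_Ici) (Set.mem_Ici.2 hx.le) hx
  simp only [Real.log_one, zero_mul, add_zero, mul_zero, zero_div, sub_zero, mul_one] at this
  linarith [this]

/-- For every integer `n ≥ 2`, the difference between the `n`-th harmonic number and `log n`
lies strictly between `γ + 1/(2(n+1))` and `γ + 1/(2(n-1))`, where `γ` is the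
Euler–Mascheroni constant. -/
theorem harmonic_sub_log_bounds (n : ℕ) (hn : 2 ≤ n) :
    Real.eulerMascheroniConstant + 1 / (2 * ((n : ℝ) + 1)) <
      (∑ k ∈ Finset.Icc 1 n, (1 : ℝ) / k) - Real.log n ∧
    (∑ k ∈ Finset.Icc 1 n, (1 : ℝ) / k) - Real.log n <
      Real.eulerMascheroniConstant + 1 / (2 * ((n : ℝ) - 1)) := by
  -- rewrite the sum as the harmonic number
  have hsum : ∀ m : ℕ, (∑ k ∈ Finset.Icc 1 m, (1 : ℝ) / k) = ((harmonic m : ℚ) : ℝ) := by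
    intro m
    rw [harmonic_eq_sum_Icc]
    push_cast
    simp [one_div]
  -- key per-step inequalities
  have step_lower : ∀ m : ℕ, 1 ≤ m →
      1 / (2 * ((m : ℝ) + 1) * ((m : ℝ) + 2)) < Real.log (1 + 1 / m) - 1 / (m + 1) := by
    intro m hm
    have hm' : (1 : ℝ) ≤ m := by exact_mod_cast hm
    have hx : (0 : ℝ) < 1 / m := by positivity
    have := aux_log_lower hx
    have key : 2 * (1 / (m:ℝ)) / (2 + 1 / m) = 2 / (2 * m + 1) := by
      field_simp
      try ring
    rw [key] at this
    have h1 : 2 / (2 * (m:ℝ) + 1) - 1 / (m + 1) = 1 / ((2 * m + 1) * (m + 1)) := by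
      field_simp
      try ring
    have h2 : 1 / (2 * ((m : ℝ) + 1) * ((m : ℝ) + 2)) < 1 / ((2 * m + 1) * (m + 1)) := by
      apply one_div_lt_one_div_of_lt
      · positivity
      · nlinarith
    linarith
  have step_upper : ∀ m : ℕ, 1 ≤ m →
      Real.log (1 + 1 / m) - 1 / (m + 1) < 1 / (2 * (m : ℝ) * ((m : ℝ) + 1)) := by
    intro m hm
    have hm' : (1 : ℝ) ≤ m := by exact_mod_cast hm
    have hx : (0 : ℝ) < 1 / m := by positivity
    have := aux_log_upper hx
    have key : (1 / (m:ℝ)) * (2 + 1 / m) / (2 * (1 + 1 / m)) = (2 * m + 1) / (2 * m * (m + 1)) := by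
      field_simp
      try ring
    rw [key] at this
    have h1 : (2 * (m:ℝ) + 1) / (2 * m * (m + 1)) - 1 / (m + 1) = 1 / (2 * m * (m + 1)) := by
      field_simp
      try ring
    linarith
  -- log (m+1) - log m = log (1 + 1/m)
  have hlogstep : ∀ m : ℕ, 1 ≤ m →
      Real.log (m + 1) - Real.log m = Real.log (1 + 1 / m) := by
    intro m hm
    have hm' : (0 : ℝ) < m := by exact_mod_cast hm
    rw [← Real.log_div (by positivity) hm'.ne']
    congr 1
    field_simp
  -- the two auxiliary sequences
  set f : ℕ → ℝ := fun m => ((harmonic m : ℚ) : ℝ) - Real.log m - 1 / (2 * ((m : ℝ) + 1)) with hf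
  set g : ℕ → ℝ := fun m => ((harmonic m : ℚ) : ℝ) - Real.log m - 1 / (2 * ((m : ℝ) - 1)) with hg
  have hfanti : ∀ m : ℕ, 1 ≤ m → f (m + 1) < f m := by
    intro m hm
    have hm' : (1 : ℝ) ≤ m := by exact_mod_cast hm
    have hstep := step_lower m hm
    have hls := hlogstep m hm
    have hharm : ((harmonic (m + 1) : ℚ) : ℝ) = ((harmonic m : ℚ) : ℝ) + 1 / ((m : ℝ) + 1) := by
      rw [harmonic_succ]
      push_cast
      ring
    simp only [hf]
    push_cast
    rw [hharm]
    have e1 : 1 / (2 * ((m:ℝ) + 1)) - 1 / (2 * ((m:ℝ) + 1 + 1)) =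
        1 / (2 * ((m:ℝ) + 1) * ((m:ℝ) + 2)) := by
      field_simp
      try ring
    nlinarith [hls, hstep, e1]
  have hgmono : ∀ m : ℕ, 2 ≤ m → g m < g (m + 1) := by
    intro m hm
    have hm' : (2 : ℝ) ≤ m := by exact_mod_cast hm
    have hstep := step_upper m (le_trans one_le_two hm)
    have hls := hlogstep m (le_trans one_le_two hm)
    have hharm : ((harmonic (m + 1) : ℚ) : ℝ) = ((harmonic m : ℚ) : ℝ) + 1 / ((m : ℝ) + 1) := by
      rw [harmonic_succ]
      push_cast
      ring
    simp only [hg]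
    push_cast
    rw [hharm]
    have e1 : 1 / (2 * ((m:ℝ) - 1)) - 1 / (2 * ((m:ℝ) + 1 - 1)) =
        1 / (2 * ((m:ℝ) - 1) * m) := by
      have h1 : (0:ℝ) < m - 1 := by linarith
      have h0 : (m:ℝ) ≠ 0 := by positivity
      field_simp
      try ring
      rw [mul_inv_cancel₀ h0, pow_two, mul_assoc, mul_inv_cancel₀ h0]
      ring
    have e2 : 1 / (2 * (m:ℝ) * ((m:ℝ) + 1)) < 1 / (2 * ((m:ℝ) - 1) * m) := by
      apply one_div_lt_one_div_of_lt
      · nlinarith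
      · nlinarith
    nlinarith [hls, hstep, e1, e2]
  -- limits
  have hftend : Tendsto f atTop (𝓝 Real.eulerMascheroniConstant) := by
    have h1 := Real.tendsto_harmonic_sub_log
    have h2 : Tendsto (fun m : ℕ => 1 / (2 * ((m : ℝ) + 1))) atTop (𝓝 0) := by
      apply tendsto_const_nhds.div_atTop
      apply Tendsto.const_mul_atTop (by norm_num : (0:ℝ) < 2)
      exact Filter.tendsto_atTop_add_const_right atTop 1 tendsto_natCast_atTop_atTop
    have := h1.sub h2
    rw [sub_zero] at this
    exact this
  have hgtend : Tendsto g atTop (𝓝 Real.eulerMascheroniConstant) := by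
    have h1 := Real.tendsto_harmonic_sub_log
    have h2 : Tendsto (fun m : ℕ => 1 / (2 * ((m : ℝ) - 1))) atTop (𝓝 0) := by
      apply tendsto_const_nhds.div_atTop
      apply Tendsto.const_mul_atTop (by norm_num : (0:ℝ) < 2)
      exact Filter.tendsto_atTop_add_const_right atTop (-1) tendsto_natCast_atTop_atTop
    have := h1.sub h2
    rw [sub_zero] at this
    exact this
  -- f is antitone on [n, ∞), so γ ≤ f (n+1) < f n
  have hf_ge : Real.eulerMascheroniConstant ≤ f (n + 1) := by
    apply le_of_tendsto hftend
    filter_upwards [eventually_ge_atTop (n + 1)] with m hm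
    clear hsum
    induction m with
    | zero => omega
    | succ k ih =>
      rcases Nat.lt_or_ge (n + 1) (k + 1) with h | h
      · have hk : n + 1 ≤ k := by omega
        exact le_trans (hfanti k (by omega)).le (ih hk)
      · have : k + 1 = n + 1 := by omega
        rw [this]
  have hg_le : g (n + 1) ≤ Real.eulerMascheroniConstant := by
    apply ge_of_tendsto hgtend
    filter_upwards [eventually_ge_atTop (n + 1)] with m hm
    induction m with
    | zero => omega
    | succ k ih =>
      rcases Nat.lt_or_ge (n + 1) (k + 1) with h | h
      · have hk : n + 1 ≤ k := by omega
        exact le_trans (ih hk) (hgmono k (by omega)).le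
      · have : k + 1 = n + 1 := by omega
        rw [this]
  have hfn : Real.eulerMascheroniConstant < f n := lt_of_le_of_lt hf_ge (hfanti n (by omega))
  have hgn : g n < Real.eulerMascheroniConstant := lt_of_lt_of_le (hgmono n hn) hg_le
  rw [hsum n]
  constructor
  · simp only [hf] at hfn
    linarith
  · simp only [hg] at hgn
    linarith
end

section
/- Let t_0 = 0 and t_k = ∑_{j=1}^k 1/(j+1) for k ≥ 1, and for t ≥ 0 define m(t) = sup{k ≥ 1 : t_k ≤ t}. Then for each fixed t ≥ 0, m(t_n - t)/n → exp(-t) as n → ∞. -/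
open Real Filter

/-- `t_k = ∑_{j=1}^k 1/(j+1)`. -/
noncomputable def tseq (k : ℕ) : ℝ := ∑ j ∈ Finset.range k, (1 : ℝ) / (j + 2)

/-- `m(t) = sup {k ≥ 1 : t_k ≤ t}`. -/
noncomputable def mfun (t : ℝ) : ℕ := sSup {k : ℕ | 1 ≤ k ∧ tseq k ≤ t}

lemma tseq_succ (k : ℕ) : tseq (k+1) = tseq k + 1/(k+2) := Finset.sum_range_succ _ _

lemma tseq_strictMono : StrictMono tseq := by
  apply strictMono_nat_of_lt_succ
  intro k
  rw [tseq_succ]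
  have : (0:ℝ) < 1/(k+2) := by positivity
  linarith

lemma tseq_eq (k : ℕ) : tseq k = (harmonic (k+1) : ℝ) - 1 := by
  rw [harmonic]
  push_cast
  rw [Finset.sum_range_succ']
  simp [tseq]
  apply Finset.sum_congr rfl
  intro j _
  norm_num
  ring

noncomputable def Lf (n : ℕ) : ℝ := (harmonic n : ℝ) - Real.log n

lemma Lf_tendsto : Tendsto Lf atTop (nhds Real.eulerMascheroniConstant) :=
  Real.tendsto_harmonic_sub_log

lemma tseq_eq' (k : ℕ) : tseq k = Real.log (k+1) + Lf (k+1) - 1 := by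
  rw [tseq_eq, Lf]
  push_cast
  ring

lemma tseq_tendsto : Tendsto tseq atTop atTop := by
  have h1 : Tendsto (fun k : ℕ => Real.log (k+1)) atTop atTop := by
    apply Real.tendsto_log_atTop.comp
    exact tendsto_atTop_add_const_right _ 1 tendsto_natCast_atTop_atTop
  have h2 : Tendsto (fun k : ℕ => Lf (k+1) - 1) atTop (nhds (Real.eulerMascheroniConstant - 1)) :=
    ((Lf_tendsto.comp (tendsto_add_atTop_nat 1)).sub_const 1)
  have := h1.atTop_add h2
  apply this.congr
  intro k
  rw [tseq_eq']
  ring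



lemma tseq_one : tseq 1 = 1/2 := by simp [tseq]

lemma mfun_spec {s : ℝ} (hs : 1/2 ≤ s) :
    1 ≤ mfun s ∧ tseq (mfun s) ≤ s ∧ s < tseq (mfun s + 1) := by
  set S : Set ℕ := {k : ℕ | 1 ≤ k ∧ tseq k ≤ s} with hS
  have hne : S.Nonempty := ⟨1, le_refl 1, by rw [tseq_one]; exact hs⟩
  obtain ⟨N, hN⟩ := (tseq_tendsto.eventually (eventually_gt_atTop s)).exists_forall_of_atTop
  have hbdd : BddAbove S := by
    refine ⟨N, fun k hk => ?_⟩
    by_contra h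
    push_neg at h
    exact absurd (hN k h.le) (not_lt.mpr hk.2)
  have hmem : mfun s ∈ S := Nat.sSup_mem hne hbdd
  refine ⟨hmem.1, hmem.2, ?_⟩
  by_contra h
  push_neg at h
  have : mfun s + 1 ∈ S := ⟨le_trans hmem.1 (Nat.le_succ _), h⟩
  have h2 := le_csSup hbdd this
  have heq : sSup S = mfun s := rfl
  omega

/-- For each fixed `t ≥ 0`, `m(t_n - t)/n → exp (-t)` as `n → ∞`. -/
theorem mfun_div_tendsto (t : ℝ) (ht : 0 ≤ t) :
    Tendsto (fun n : ℕ => (mfun (tseq n - t) : ℝ) / n) atTop (nhds (Real.exp (-t))) := by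
  set m : ℕ → ℕ := fun n => mfun (tseq n - t) with hm_def
  -- eventually the bracket holds
  have hev : ∀ᶠ n in atTop, 1/2 ≤ tseq n - t := by
    have := tseq_tendsto.eventually (eventually_ge_atTop (1/2 + t))
    filter_upwards [this] with n hn; linarith
  have hbr : ∀ᶠ n in atTop, 1 ≤ m n ∧ tseq (m n) ≤ tseq n - t ∧ tseq n - t < tseq (m n + 1) := by
    filter_upwards [hev] with n hn; exact mfun_spec hn
  -- m tends to atTop
  have hmtop : Tendsto m atTop atTop := by
    rw [tendsto_atTop_atTop]
    intro K
    have h2 := tseq_tendsto.eventually (eventually_ge_atTop (tseq K + t))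
    obtain ⟨N, hN⟩ := (hbr.and h2).exists_forall_of_atTop
    refine ⟨N, fun n hn => ?_⟩
    obtain ⟨⟨_, _, h3⟩, h4⟩ := hN n hn
    have : tseq K ≤ tseq n - t := by linarith
    have : tseq K < tseq (m n + 1) := lt_of_le_of_lt this h3
    have := tseq_strictMono.lt_iff_lt.mp this
    omega
  -- log difference facts
  have hlogd : Tendsto (fun k : ℕ => Real.log (k+2) - Real.log (k+1)) atTop (nhds 0) := by
    have h1 : Tendsto (fun k : ℕ => 1 + 1/((k:ℝ)+1)) atTop (nhds 1) := by
      simpa using (tendsto_const_nhds (x := (1:ℝ))).add tendsto_one_div_add_atTop_nhds_zero_nat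
    have h2 := ((Real.continuousAt_log one_ne_zero).tendsto.comp h1)
    rw [Real.log_one] at h2
    apply h2.congr
    intro k
    have hk1 : ((k:ℝ)+1) ≠ 0 := by positivity
    simp only [Function.comp]
    rw [← Real.log_div (by positivity) hk1]
    congr 1
    field_simp
    ring
  -- Lf differences
  have hLn : Tendsto (fun n : ℕ => Lf (n+1)) atTop (nhds Real.eulerMascheroniConstant) :=
    Lf_tendsto.comp (tendsto_add_atTop_nat 1)
  have hLm1 : Tendsto (fun n : ℕ => Lf (m n + 1)) atTop (nhds Real.eulerMascheroniConstant) :=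
    (Lf_tendsto.comp (tendsto_add_atTop_nat 1)).comp hmtop
  have hLm2 : Tendsto (fun n : ℕ => Lf (m n + 2)) atTop (nhds Real.eulerMascheroniConstant) :=
    (Lf_tendsto.comp (tendsto_add_atTop_nat 2)).comp hmtop
  have hlogm : Tendsto (fun n : ℕ => Real.log (m n + 2) - Real.log (m n + 1)) atTop (nhds 0) :=
    hlogd.comp hmtop
  -- the key log limit via squeeze
  set a : ℕ → ℝ := fun n => Real.log (m n + 1) - Real.log (n+1) with ha_def
  have hau : ∀ᶠ n in atTop, a n ≤ -t - (Lf (m n + 1) - Lf (n+1)) := by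
    filter_upwards [hbr] with n hn
    have h1 := hn.2.1
    rw [tseq_eq' (m n), tseq_eq' n] at h1
    simp only [ha_def]
    push_cast
    push_cast at h1
    linarith
  have hal : ∀ᶠ n in atTop,
      -t - (Lf (m n + 2) - Lf (n+1)) - (Real.log (m n + 2) - Real.log (m n + 1)) ≤ a n := by
    filter_upwards [hbr] with n hn
    have h2 := hn.2.2
    rw [tseq_eq' (m n + 1), tseq_eq' n] at h2
    have e2 : m n + 1 + 1 = m n + 2 := rfl
    rw [e2] at h2
    have e1 : ((m n : ℕ) : ℝ) + 1 + 1 = ((m n : ℕ) : ℝ) + 2 := by ring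
    push_cast at h2
    rw [e1] at h2
    simp only [ha_def]
    push_cast
    linarith
  have hulim : Tendsto (fun n : ℕ => -t - (Lf (m n + 1) - Lf (n+1))) atTop (nhds (-t)) := by
    have := (hLm1.sub hLn)
    simpa using (tendsto_const_nhds (x := -t)).sub this
  have hllim : Tendsto (fun n : ℕ =>
      -t - (Lf (m n + 2) - Lf (n+1)) - (Real.log (m n + 2) - Real.log (m n + 1)))
      atTop (nhds (-t)) := by
    have h1 := (hLm2.sub hLn)
    have := ((tendsto_const_nhds (x := -t)).sub h1).sub hlogm
    simpa using this
  have ha : Tendsto a atTop (nhds (-t)) :=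
    tendsto_of_tendsto_of_tendsto_of_le_of_le' hllim hulim hal hau
  -- exponentiate
  have hb : Tendsto (fun n : ℕ => ((m n : ℝ) + 1)/((n:ℝ)+1)) atTop (nhds (Real.exp (-t))) := by
    have := (Real.continuous_exp.tendsto _).comp ha
    apply this.congr
    intro n
    simp only [Function.comp, ha_def]
    rw [Real.exp_sub, Real.exp_log (by positivity), Real.exp_log (by positivity)]
  -- corrections
  have hc1 : Tendsto (fun n : ℕ => ((n:ℝ)+1)/(n:ℝ)) atTop (nhds 1) := by
    have h1 : Tendsto (fun n : ℕ => 1 + 1/(n:ℝ)) atTop (nhds 1) := by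
      simpa using (tendsto_const_nhds (x := (1:ℝ))).add tendsto_one_div_atTop_nhds_zero_nat
    apply h1.congr'
    filter_upwards [eventually_ge_atTop 1] with n hn
    have : (n:ℝ) ≠ 0 := by positivity
    field_simp
  have hc2 : Tendsto (fun n : ℕ => (m n : ℝ)/((m n : ℝ)+1)) atTop (nhds 1) := by
    have h1 : Tendsto (fun k : ℕ => (k:ℝ)/((k:ℝ)+1)) atTop (nhds 1) := by
      have h2 : Tendsto (fun k : ℕ => 1 - 1/((k:ℝ)+1)) atTop (nhds 1) := by
        simpa using (tendsto_const_nhds (x := (1:ℝ))).sub tendsto_one_div_add_atTop_nhds_zero_nat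
      apply h2.congr
      intro k
      have : ((k:ℝ)+1) ≠ 0 := by positivity
      field_simp
      ring
    exact h1.comp hmtop
  have := (hb.mul hc1).mul hc2
  rw [mul_one, mul_one] at this
  apply this.congr'
  filter_upwards [eventually_ge_atTop 1] with n hn
  have hn0 : (n:ℝ) ≠ 0 := by positivity
  have hm0 : ((m n : ℝ)+1) ≠ 0 := by positivity
  field_simp
  ring
end

section
/- Let q be a probability vector on a finite set Δ° with q(x) ≥ δ_0 > 0 for all x, and let p, p̃ be probability vectors with p(x) ≥ δ and p̃(x) ≥ δ for all x, where 0 < δ < 1. Then |R(p ‖ q) - R(p̃ ‖ q)| ≤ (|log δ_0| + |log δ| + 1) · ‖p - p̃‖_1. -/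
open Real

noncomputable def relEnt {d : ℕ} (ν μ : Fin d → ℝ) : ℝ := ∑ x, ν x * Real.log (ν x / μ x)

/-!
Each summand `t ↦ t log (t / q x)` of the relative entropy has derivative `log t - log (q x) + 1`,
which on `[δ, 1]` is bounded in absolute value by `|log δ| + |log δ₀| + 1` because `|log|` is
antitone on `(0, 1]`. The mean value theorem bounds each summand's variation, and summing over
`x` gives the `ℓ¹` bound.
-/

namespace Real

lemma abs_log_le_abs_log_of_le_of_le_one {a t : ℝ} (ha : 0 < a) (hat : a ≤ t) (ht : t ≤ 1) :
    |log t| ≤ |log a| := by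
  rw [abs_of_nonpos (log_nonpos (ha.le.trans hat) ht),
    abs_of_nonpos (log_nonpos ha.le (hat.trans ht))]
  exact neg_le_neg (log_le_log ha hat)

lemma hasDerivAt_mul_log_div {c t : ℝ} (hc : c ≠ 0) (ht : t ≠ 0) :
    HasDerivAt (fun s => s * log (s / c)) (log (t / c) + 1) t := by
  have hlog := ((hasDerivAt_id' t).div_const c).log (div_ne_zero ht hc)
  refine ((hasDerivAt_id' t).mul hlog).congr_deriv ?_
  field_simp

lemma abs_mul_log_div_sub_le {δ₀ δ c a b : ℝ} (hδ₀ : 0 < δ₀) (hδ : 0 < δ)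
    (hc : c ∈ Set.Icc δ₀ 1) (ha : a ∈ Set.Icc δ 1) (hb : b ∈ Set.Icc δ 1) :
    |a * log (a / c) - b * log (b / c)| ≤ (|log δ₀| + |log δ| + 1) * |a - b| := by
  have hc₀ : 0 < c := hδ₀.trans_le hc.1
  have hderiv : ∀ t ∈ Set.Icc δ 1,
      HasDerivWithinAt (fun s => s * log (s / c)) (log (t / c) + 1) (Set.Icc δ 1) t :=
    fun t ht => (hasDerivAt_mul_log_div hc₀.ne' (hδ.trans_le ht.1).ne').hasDerivWithinAt
  have hbound : ∀ t ∈ Set.Icc δ 1, ‖log (t / c) + 1‖ ≤ |log δ₀| + |log δ| + 1 := by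
    intro t ht
    have ht₀ : 0 < t := hδ.trans_le ht.1
    calc ‖log (t / c) + 1‖ = |log t - log c + 1| := by
          rw [norm_eq_abs, log_div ht₀.ne' hc₀.ne']
      _ ≤ |log t| + |log c| + |1| := by
          simpa only [sub_eq_add_neg, abs_neg] using abs_add_three (log t) (-log c) 1
      _ ≤ |log δ| + |log δ₀| + 1 := by
          rw [abs_one]
          gcongr ?_ + ?_ + _
          · exact abs_log_le_abs_log_of_le_of_le_one hδ ht.1 ht.2
          · exact abs_log_le_abs_log_of_le_of_le_one hδ₀ hc.1 hc.2
      _ = |log δ₀| + |log δ| + 1 := by ring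
  simpa only [norm_eq_abs] using
    (convex_Icc δ 1).norm_image_sub_le_of_norm_hasDerivWithin_le hderiv hbound hb ha

end Real

theorem relEnt_first_arg_lipschitz_general {d : ℕ} (δ₀ δ : ℝ) (hδ₀ : 0 < δ₀)
    (hδ : 0 < δ)
    (p p' q : Fin d → ℝ) (hp : p ∈ stdSimplex ℝ (Fin d))
    (hp' : p' ∈ stdSimplex ℝ (Fin d)) (hq : q ∈ stdSimplex ℝ (Fin d))
    (hqδ : ∀ x, δ₀ ≤ q x) (hpδ : ∀ x, δ ≤ p x) (hp'δ : ∀ x, δ ≤ p' x) :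
    |relEnt p q - relEnt p' q| ≤ (|Real.log δ₀| + |Real.log δ| + 1) * ∑ x, |p x - p' x| := by
  rw [relEnt, relEnt, ← Finset.sum_sub_distrib, Finset.mul_sum]
  refine (Finset.abs_sum_le_sum_abs _ _).trans (Finset.sum_le_sum fun x _ => ?_)
  exact abs_mul_log_div_sub_le hδ₀ hδ ⟨hqδ x, (mem_Icc_of_mem_stdSimplex hq x).2⟩
    ⟨hpδ x, (mem_Icc_of_mem_stdSimplex hp x).2⟩
    ⟨hp'δ x, (mem_Icc_of_mem_stdSimplex hp' x).2⟩

/-- If `q ≥ δ₀ > 0` componentwise and `p, p̃ ≥ δ` componentwise with `0 < δ < 1`, then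
`|R(p‖q) - R(p̃‖q)| ≤ (|log δ₀| + |log δ| + 1) ‖p - p̃‖₁`. -/
theorem relEnt_first_arg_lipschitz {d : ℕ} (δ₀ δ : ℝ) (hδ₀ : 0 < δ₀)
    (hδ : 0 < δ) (hδ1 : δ < 1)
    (p p' q : Fin d → ℝ) (hp : p ∈ stdSimplex ℝ (Fin d))
    (hp' : p' ∈ stdSimplex ℝ (Fin d)) (hq : q ∈ stdSimplex ℝ (Fin d))
    (hqδ : ∀ x, δ₀ ≤ q x) (hpδ : ∀ x, δ ≤ p x) (hp'δ : ∀ x, δ ≤ p' x) :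
    |relEnt p q - relEnt p' q| ≤ (|Real.log δ₀| + |Real.log δ| + 1) * ∑ x, |p x - p' x| :=
  relEnt_first_arg_lipschitz_general δ₀ δ hδ₀ hδ p p' q hp hp' hq hqδ hpδ hp'δ
end

section
/- Let η : [0,T] → 𝒫(Δ°) be measurable, κ ∈ (0,1), and define the mollified control η^κ(s) = κ^{-1} ∫_s^{s+κ} η(u) du (with η(u) := η(T) for u > T). Let M solve M(t) = q + ∫_0^t η(s)ds - ∫_0^t M(s)ds and M^κ solve M^κ(t) = q + ∫_0^t η^κ(s)ds - ∫_0^t M^κ(s)ds, both with the same initial point q ∈ 𝒫(Δ°). Then sup_{0 ≤ t ≤ T} ‖M^κ(t) - M(t)‖ ≤ 3κ e^T. -/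
open Real MeasureTheory

/-- Grönwall inequality in integral form. -/
theorem gronwall_integral_aux {T A : ℝ} (hT : 0 ≤ T) (hA : 0 ≤ A) {f : ℝ → ℝ}
    (hc : ContinuousOn f (Set.Icc 0 T)) (hpos : ∀ t ∈ Set.Icc (0:ℝ) T, 0 ≤ f t)
    (h : ∀ t ∈ Set.Icc (0:ℝ) T, f t ≤ A + ∫ s in (0:ℝ)..t, f s) :
    ∀ t ∈ Set.Icc (0:ℝ) T, f t ≤ A * Real.exp t := by
  set g : ℝ → ℝ := fun t => A + ∫ s in (0:ℝ)..t, f s with hg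
  have hint : ∀ t ∈ Set.Icc (0:ℝ) T, IntervalIntegrable f volume 0 t := by
    intro t ht
    exact (hc.mono (by rw [Set.uIcc_of_le ht.1]; exact Set.Icc_subset_Icc le_rfl ht.2)).intervalIntegrable
  have hgc : ContinuousOn g (Set.Icc 0 T) := by
    apply continuousOn_const.add
    have := intervalIntegral.continuousOn_primitive_interval' (a := 0)
      (hint T ⟨hT, le_rfl⟩) (by simp [Set.uIcc_of_le hT, hT])
    rwa [Set.uIcc_of_le hT] at this
  have hgpos : ∀ t ∈ Set.Icc (0:ℝ) T, 0 ≤ g t := by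
    intro t ht
    have : 0 ≤ ∫ s in (0:ℝ)..t, f s :=
      intervalIntegral.integral_nonneg ht.1 (fun u hu => hpos u ⟨hu.1, hu.2.trans ht.2⟩)
    simp only [hg]; linarith
  have hderiv : ∀ t ∈ Set.Ico (0:ℝ) T, HasDerivWithinAt g (f t) (Set.Ici t) t := by
    intro t ht
    apply HasDerivWithinAt.const_add
    have hmem : Set.Icc 0 T ∈ nhdsWithin t (Set.Ioi t) := by
      rw [mem_nhdsWithin]
      exact ⟨Set.Iio T, isOpen_Iio, ht.2, fun u hu => ⟨ht.1.trans hu.2.le, hu.1.le⟩⟩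
    apply intervalIntegral.integral_hasDerivWithinAt_right (hint t ⟨ht.1, ht.2.le⟩)
      (t := Set.Ioi t)
    · exact ⟨Set.Icc 0 T, hmem, hc.aestronglyMeasurable measurableSet_Icc⟩
    · exact (hc.continuousWithinAt ⟨ht.1, ht.2.le⟩).mono_of_mem_nhdsWithin hmem
  have key : ∀ t ∈ Set.Icc (0:ℝ) T, ‖g t‖ ≤ gronwallBound A 1 0 (t - 0) := by
    apply norm_le_gronwallBound_of_norm_deriv_right_le hgc hderiv
    · simp [hg, abs_of_nonneg hA]
    · intro t ht
      have h1 := hpos t ⟨ht.1, ht.2.le⟩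
      have h2 := h t ⟨ht.1, ht.2.le⟩
      have h3 := hgpos t ⟨ht.1, ht.2.le⟩
      rw [Real.norm_eq_abs, Real.norm_eq_abs, abs_of_nonneg h1, abs_of_nonneg h3]
      simpa [hg] using h2
  intro t ht
  have hk := key t ht
  rw [gronwallBound_ε0, Real.norm_eq_abs, abs_of_nonneg (hgpos t ht)] at hk
  calc f t ≤ g t := h t ht
    _ ≤ A * Real.exp t := by simpa using hk

/-- ℓ¹ distance on `ℝ^d`. -/
noncomputable def l1dist {d : ℕ} (u v : Fin d → ℝ) : ℝ := ∑ x, |u x - v x|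

/-- Mollification estimate: if `η^κ(s) = κ⁻¹ ∫_s^{s+κ} η(u) du` (with `η` frozen at `η(T)` past
`T`) and `M`, `M^κ` solve the controlled equations driven by `η` and `η^κ` with the same initial
point `q`, then `sup_{0 ≤ t ≤ T} ‖M^κ(t) - M(t)‖ ≤ 3 κ e^T`. -/
theorem mollified_control_stability {d : ℕ} (T κ : ℝ) (hT : 0 ≤ T) (hκ0 : 0 < κ) (hκ1 : κ < 1)
    (q : Fin d → ℝ) (hq : q ∈ stdSimplex ℝ (Fin d))
    (η : ℝ → Fin d → ℝ) (hmeas : ∀ x, Measurable fun s => η s x)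
    (hη : ∀ s, 0 ≤ s → η s ∈ stdSimplex ℝ (Fin d))
    (hext : ∀ u, T < u → η u = η T)
    (ηκ : ℝ → Fin d → ℝ)
    (hηκ : ∀ s ∈ Set.Icc (0:ℝ) T, ∀ x, ηκ s x = κ⁻¹ * ∫ u in s..(s + κ), η u x)
    (M Mκ : ℝ → Fin d → ℝ)
    (hMc : ContinuousOn M (Set.Icc 0 T)) (hMκc : ContinuousOn Mκ (Set.Icc 0 T))
    (hM : ∀ t ∈ Set.Icc (0:ℝ) T, ∀ x,
      M t x = q x + (∫ s in (0:ℝ)..t, η s x) - ∫ s in (0:ℝ)..t, M s x)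
    (hMκ : ∀ t ∈ Set.Icc (0:ℝ) T, ∀ x,
      Mκ t x = q x + (∫ s in (0:ℝ)..t, ηκ s x) - ∫ s in (0:ℝ)..t, Mκ s x) :
    ∀ t ∈ Set.Icc (0:ℝ) T, l1dist (Mκ t) (M t) ≤ 3 * κ * Real.exp T := by
  have hη0 : ∀ s, 0 ≤ s → ∀ x, 0 ≤ η s x := fun s hs x => (hη s hs).1 x
  have hη1 : ∀ s, 0 ≤ s → ∑ x, η s x = 1 := fun s hs => (hη s hs).2
  -- integrability of the coordinates of η
  have ηint : ∀ (x : Fin d) {a b : ℝ}, 0 ≤ a → a ≤ b →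
      IntervalIntegrable (fun s => η s x) volume a b := by
    intro x a b ha hab
    rw [intervalIntegrable_iff_integrableOn_Ioc_of_le hab]
    refine Integrable.mono' (g := fun _ => (1:ℝ))
      (integrableOn_const (C := (1:ℝ)) measure_Ioc_lt_top.ne)
      ((hmeas x).aestronglyMeasurable) ?_
    filter_upwards [ae_restrict_mem measurableSet_Ioc] with s hs
    have h0 : (0:ℝ) ≤ s := ha.trans hs.1.le
    rw [Real.norm_eq_abs, abs_of_nonneg (hη0 s h0 x)]
    calc η s x ≤ ∑ y, η s y :=
          Finset.single_le_sum (fun y _ => hη0 s h0 y) (Finset.mem_univ _)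
      _ = 1 := hη1 s h0
  set F : Fin d → ℝ → ℝ := fun x s => ∫ u in (0:ℝ)..s, η u x with hF
  have hF0 : ∀ x, F x 0 = 0 := by intro x; simp [hF]
  have hFdiff : ∀ (x : Fin d) {t s : ℝ}, 0 ≤ t → t ≤ s →
      F x s - F x t = ∫ u in t..s, η u x := by
    intro x t s ht hts
    have h := intervalIntegral.integral_add_adjacent_intervals
      (ηint x le_rfl ht) (ηint x ht hts)
    simp only [hF]
    linarith
  have hFd_nonneg : ∀ (x : Fin d) {t s : ℝ}, 0 ≤ t → t ≤ s → 0 ≤ F x s - F x t := by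
    intro x t s ht hts
    rw [hFdiff x ht hts]
    exact intervalIntegral.integral_nonneg hts fun u hu => hη0 u (ht.trans hu.1) x
  have hFsum : ∀ {t s : ℝ}, 0 ≤ t → t ≤ s → ∑ x, (F x s - F x t) = s - t := by
    intro t s ht hts
    rw [Finset.sum_congr rfl (fun x _ => hFdiff x ht hts),
      ← intervalIntegral.integral_finset_sum (fun x _ => ηint x ht hts),
      intervalIntegral.integral_congr (g := fun _ => (1:ℝ))
        (fun u hu => hη1 u (ht.trans (by rw [Set.uIcc_of_le hts] at hu; exact hu.1)))]
    simp
  have hTκ : (0:ℝ) ≤ T + κ := by linarith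
  have hFc : ∀ x, ContinuousOn (F x) (Set.Icc 0 (T + κ)) := by
    intro x
    have := intervalIntegral.continuousOn_primitive_interval' (a := 0)
      (ηint x le_rfl hTκ) (by simp [Set.uIcc_of_le hTκ, hTκ])
    rwa [Set.uIcc_of_le hTκ] at this
  have hFint : ∀ (x : Fin d) {a b : ℝ}, 0 ≤ a → a ≤ b → b ≤ T + κ →
      IntervalIntegrable (F x) volume a b := by
    intro x a b ha hab hb
    exact ((hFc x).mono (by rw [Set.uIcc_of_le hab]; exact Set.Icc_subset_Icc ha hb)).intervalIntegrable
  -- the key identity for the mollified integral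
  have hD : ∀ t ∈ Set.Icc (0:ℝ) T, ∀ x,
      (∫ s in (0:ℝ)..t, ηκ s x) - F x t
        = κ⁻¹ * (∫ s in t..(t + κ), (F x s - F x t)) - κ⁻¹ * ∫ s in (0:ℝ)..κ, F x s := by
    intro t ht x
    have hshift : ContinuousOn (fun s => F x (s + κ)) (Set.Icc 0 t) := by
      apply (hFc x).comp (by fun_prop)
      intro s hs
      exact ⟨show (0:ℝ) ≤ s + κ by linarith [hs.1, hκ0.le],
        show s + κ ≤ T + κ by linarith [hs.2, ht.2]⟩
    have hshiftInt : IntervalIntegrable (fun s => F x (s + κ)) volume 0 t := by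
      exact (hshift.mono (by rw [Set.uIcc_of_le ht.1])).intervalIntegrable
    have hFt : IntervalIntegrable (F x) volume 0 t := hFint x le_rfl ht.1 (by linarith [ht.2])
    have h1 : ∫ s in (0:ℝ)..t, ηκ s x = κ⁻¹ * ∫ s in (0:ℝ)..t, (F x (s + κ) - F x s) := by
      rw [← intervalIntegral.integral_const_mul]
      apply intervalIntegral.integral_congr
      intro s hs
      rw [Set.uIcc_of_le ht.1] at hs
      show ηκ s x = κ⁻¹ * (F x (s + κ) - F x s)
      rw [hFdiff x hs.1 (by linarith [hκ0.le]), hηκ s ⟨hs.1, hs.2.trans ht.2⟩ x]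
    have h2 : ∫ s in (0:ℝ)..t, (F x (s + κ) - F x s)
        = (∫ s in κ..(t + κ), F x s) - ∫ s in (0:ℝ)..t, F x s := by
      rw [intervalIntegral.integral_sub hshiftInt hFt,
        intervalIntegral.integral_comp_add_right (f := F x) κ, zero_add]
    have i1 : IntervalIntegrable (F x) volume 0 κ :=
      hFint x le_rfl hκ0.le (by linarith [ht.2])
    have i2 : IntervalIntegrable (F x) volume κ (t + κ) :=
      hFint x hκ0.le (by linarith [ht.1]) (by linarith [ht.2])
    have i3 : IntervalIntegrable (F x) volume t (t + κ) :=
      hFint x ht.1 (by linarith [hκ0.le]) (by linarith [ht.2])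
    have a1 := intervalIntegral.integral_add_adjacent_intervals i1 i2
    have a2 := intervalIntegral.integral_add_adjacent_intervals hFt i3
    have h4 : ∫ s in t..(t + κ), (F x s - F x t)
        = (∫ s in t..(t + κ), F x s) - κ * F x t := by
      rw [intervalIntegral.integral_sub i3 intervalIntegrable_const,
        intervalIntegral.integral_const]
      simp [smul_eq_mul]
      try ring
    rw [h1, h2, h4]
    have hκne : κ ≠ 0 := hκ0.ne'
    field_simp
    ring_nf
    nlinarith [a1, a2]
  -- the ℓ¹ bound on the mollification error
  have hDb : ∀ t ∈ Set.Icc (0:ℝ) T,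
      ∑ x, |(∫ s in (0:ℝ)..t, ηκ s x) - F x t| ≤ 2 * κ := by
    intro t ht
    have hIc : ∀ x : Fin d, ContinuousOn (fun s => F x s - F x t) (Set.Icc t (t + κ)) := by
      intro x
      exact (((hFc x).mono
        (Set.Icc_subset_Icc ht.1 (by linarith [ht.2]))).sub continuousOn_const)
    have hIint : ∀ x : Fin d, IntervalIntegrable (fun s => F x s - F x t) volume t (t + κ) := by
      intro x
      exact ((hIc x).mono (by rw [Set.uIcc_of_le (by linarith [hκ0.le])])).intervalIntegrable
    have hJint : ∀ x : Fin d, IntervalIntegrable (F x) volume 0 κ :=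
      fun x => hFint x le_rfl hκ0.le (by linarith)
    have s1 : ∑ x, ∫ s in t..(t + κ), (F x s - F x t) ≤ κ * κ := by
      rw [← intervalIntegral.integral_finset_sum (fun x _ => hIint x)]
      calc (∫ s in t..(t + κ), ∑ x, (F x s - F x t))
          ≤ ∫ _ in t..(t + κ), κ := by
            have hSc : ContinuousOn (fun s => ∑ x, (F x s - F x t)) (Set.Icc t (t + κ)) :=
              continuousOn_finset_sum _ (fun x _ => hIc x)
            apply intervalIntegral.integral_mono_on (by linarith [hκ0.le])
              ((hSc.mono (by rw [Set.uIcc_of_le (by linarith [hκ0.le])])).intervalIntegrable)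
              intervalIntegrable_const
            intro s hs
            rw [hFsum ht.1 hs.1]
            linarith [hs.2]
        _ = κ * κ := by rw [intervalIntegral.integral_const]; simp [smul_eq_mul]; try ring
    have s2 : ∑ x, ∫ s in (0:ℝ)..κ, F x s ≤ κ * κ := by
      rw [← intervalIntegral.integral_finset_sum (fun x _ => hJint x)]
      calc (∫ s in (0:ℝ)..κ, ∑ x, F x s)
          ≤ ∫ _ in (0:ℝ)..κ, κ := by
            have hSc : ContinuousOn (fun s => ∑ x, F x s) (Set.Icc 0 κ) :=
              continuousOn_finset_sum _ (fun x _ => (hFc x).mono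
                (Set.Icc_subset_Icc le_rfl (by linarith)))
            apply intervalIntegral.integral_mono_on hκ0.le
              ((hSc.mono (by rw [Set.uIcc_of_le hκ0.le])).intervalIntegrable)
              intervalIntegrable_const
            intro s hs
            have := hFsum (le_rfl : (0:ℝ) ≤ 0) hs.1
            simp only [hF0, sub_zero] at this
            rw [this]
            linarith [hs.2]
        _ = κ * κ := by rw [intervalIntegral.integral_const]; simp [smul_eq_mul]; try ring
    have habs : ∀ x : Fin d, |(∫ s in (0:ℝ)..t, ηκ s x) - F x t|
        ≤ κ⁻¹ * (∫ s in t..(t + κ), (F x s - F x t)) + κ⁻¹ * ∫ s in (0:ℝ)..κ, F x s := by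
      intro x
      rw [hD t ht x]
      have p1 : 0 ≤ ∫ s in t..(t + κ), (F x s - F x t) :=
        intervalIntegral.integral_nonneg (by linarith [hκ0.le])
          (fun s hs => hFd_nonneg x ht.1 hs.1)
      have p2 : 0 ≤ ∫ s in (0:ℝ)..κ, F x s := by
        apply intervalIntegral.integral_nonneg hκ0.le
        intro s hs
        have := hFd_nonneg x (le_rfl : (0:ℝ) ≤ 0) hs.1
        simpa [hF0] using this
      have hκinv : (0:ℝ) ≤ κ⁻¹ := by positivity
      calc |κ⁻¹ * (∫ s in t..(t + κ), (F x s - F x t)) - κ⁻¹ * ∫ s in (0:ℝ)..κ, F x s|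
          ≤ |κ⁻¹ * (∫ s in t..(t + κ), (F x s - F x t))| + |κ⁻¹ * ∫ s in (0:ℝ)..κ, F x s| :=
            abs_sub _ _
        _ = κ⁻¹ * (∫ s in t..(t + κ), (F x s - F x t)) + κ⁻¹ * ∫ s in (0:ℝ)..κ, F x s := by
            rw [abs_of_nonneg (by positivity), abs_of_nonneg (by positivity)]
    calc ∑ x, |(∫ s in (0:ℝ)..t, ηκ s x) - F x t|
        ≤ ∑ x, (κ⁻¹ * (∫ s in t..(t + κ), (F x s - F x t))
            + κ⁻¹ * ∫ s in (0:ℝ)..κ, F x s) := Finset.sum_le_sum (fun x _ => habs x)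
      _ = κ⁻¹ * (∑ x, ∫ s in t..(t + κ), (F x s - F x t))
            + κ⁻¹ * ∑ x, ∫ s in (0:ℝ)..κ, F x s := by
          rw [Finset.sum_add_distrib, ← Finset.mul_sum, ← Finset.mul_sum]
      _ ≤ κ⁻¹ * (κ * κ) + κ⁻¹ * (κ * κ) := by
          have hκinv : (0:ℝ) ≤ κ⁻¹ := by positivity
          have q1 : 0 ≤ ∑ x, ∫ s in t..(t + κ), (F x s - F x t) :=
            Finset.sum_nonneg fun x _ => intervalIntegral.integral_nonneg
              (by linarith [hκ0.le]) (fun s hs => hFd_nonneg x ht.1 hs.1)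
          gcongr
      _ = 2 * κ := by field_simp; ring
  -- continuity and integrability of coordinates of M, Mκ
  have hMcx : ∀ x : Fin d, ContinuousOn (fun s => M s x) (Set.Icc 0 T) :=
    fun x => (continuous_apply x).comp_continuousOn hMc
  have hMκcx : ∀ x : Fin d, ContinuousOn (fun s => Mκ s x) (Set.Icc 0 T) :=
    fun x => (continuous_apply x).comp_continuousOn hMκc
  have hMix : ∀ (x : Fin d) {t : ℝ}, t ∈ Set.Icc (0:ℝ) T →
      IntervalIntegrable (fun s => M s x) volume 0 t := by
    intro x t ht
    exact ((hMcx x).mono (by rw [Set.uIcc_of_le ht.1]; exact Set.Icc_subset_Icc le_rfl ht.2)).intervalIntegrable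
  have hMκix : ∀ (x : Fin d) {t : ℝ}, t ∈ Set.Icc (0:ℝ) T →
      IntervalIntegrable (fun s => Mκ s x) volume 0 t := by
    intro x t ht
    exact ((hMκcx x).mono (by rw [Set.uIcc_of_le ht.1]; exact Set.Icc_subset_Icc le_rfl ht.2)).intervalIntegrable
  set δ : ℝ → ℝ := fun t => ∑ x, |Mκ t x - M t x| with hδ
  have hδc : ContinuousOn δ (Set.Icc 0 T) := by
    apply continuousOn_finset_sum
    intro x _
    exact ((hMκcx x).sub (hMcx x)).abs
  have hδpos : ∀ t ∈ Set.Icc (0:ℝ) T, 0 ≤ δ t :=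
    fun t _ => Finset.sum_nonneg fun x _ => abs_nonneg _
  have step : ∀ t ∈ Set.Icc (0:ℝ) T, δ t ≤ 3 * κ + ∫ s in (0:ℝ)..t, δ s := by
    intro t ht
    have hdint : ∀ x : Fin d, IntervalIntegrable (fun s => |Mκ s x - M s x|) volume 0 t :=
      fun x => ((hMκix x ht).sub (hMix x ht)).abs
    have hx : ∀ x, Mκ t x - M t x
        = ((∫ s in (0:ℝ)..t, ηκ s x) - F x t) - ∫ s in (0:ℝ)..t, (Mκ s x - M s x) := by
      intro x
      rw [hMκ t ht x, hM t ht x, intervalIntegral.integral_sub (hMκix x ht) (hMix x ht)]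
      simp only [hF]
      ring
    calc δ t ≤ ∑ x, (|(∫ s in (0:ℝ)..t, ηκ s x) - F x t|
          + |∫ s in (0:ℝ)..t, (Mκ s x - M s x)|) := by
          apply Finset.sum_le_sum
          intro x _
          rw [hx x]
          exact abs_sub _ _
      _ = (∑ x, |(∫ s in (0:ℝ)..t, ηκ s x) - F x t|)
          + ∑ x, |∫ s in (0:ℝ)..t, (Mκ s x - M s x)| := Finset.sum_add_distrib
      _ ≤ 2 * κ + ∑ x, ∫ s in (0:ℝ)..t, |Mκ s x - M s x| := by
          apply add_le_add (hDb t ht)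
          apply Finset.sum_le_sum
          intro x _
          exact intervalIntegral.abs_integral_le_integral_abs ht.1
      _ = 2 * κ + ∫ s in (0:ℝ)..t, δ s := by
          rw [← intervalIntegral.integral_finset_sum (fun x _ => hdint x)]
      _ ≤ 3 * κ + ∫ s in (0:ℝ)..t, δ s := by linarith
  have main := gronwall_integral_aux hT (by positivity : (0:ℝ) ≤ 3 * κ) hδc hδpos step
  intro t ht
  have h2 := main t ht
  have : l1dist (Mκ t) (M t) = δ t := rfl
  rw [this]
  calc δ t ≤ 3 * κ * Real.exp t := h2
    _ ≤ 3 * κ * Real.exp T := by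
        have := Real.exp_le_exp.2 ht.2
        nlinarith [hκ0]
end

section
/- Let f : [0,T] → [0, C] be measurable with C = -log δ_0 > 0, and let κ ∈ (0,1). Then ∫_0^T e^s · κ^{-1} ∫_s^{s+κ} f(u) du ds ≤ ∫_0^T e^u f(u) du + κ e^{T+κ} C, where f(u) := C for u > T. -/
open Real MeasureTheory

private lemma II_aux (φ : ℝ → ℝ) (hφ : Measurable φ) (a b M : ℝ)
    (h : ∀ u ∈ Set.uIoc a b, |φ u| ≤ M) : IntervalIntegrable φ volume a b := by
  rw [intervalIntegrable_iff]
  have hconst : IntegrableOn (fun _ => M) (Set.uIoc a b) volume :=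
    integrableOn_const (by rw [Set.uIoc]; exact measure_Ioc_lt_top.ne)
  refine MeasureTheory.Integrable.mono' hconst hφ.aestronglyMeasurable.restrict ?_
  exact (ae_restrict_iff' measurableSet_uIoc).2 (ae_of_all _ h)

/-- Fubini-type discounting estimate for the mollified cost: if `0 ≤ f ≤ C` on `[0,T]` with
`C = -log δ₀ > 0`, `f ≡ C` past `T`, and `κ ∈ (0,1)`, then
`∫_0^T e^s κ⁻¹ ∫_s^{s+κ} f(u) du ds ≤ ∫_0^T e^u f(u) du + κ e^{T+κ} C`. -/
theorem mollified_cost_estimate (T δ₀ κ : ℝ) (hT : 0 ≤ T) (hκ0 : 0 < κ) (hκ1 : κ < 1)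
    (hδ₀ : 0 < δ₀) (hC : 0 < -Real.log δ₀)
    (f : ℝ → ℝ) (hmeas : Measurable f)
    (hf : ∀ u ∈ Set.Icc (0:ℝ) T, f u ∈ Set.Icc (0:ℝ) (-Real.log δ₀))
    (hext : ∀ u, T < u → f u = -Real.log δ₀) :
    (∫ s in (0:ℝ)..T, Real.exp s * (κ⁻¹ * ∫ u in s..(s + κ), f u)) ≤
      (∫ u in (0:ℝ)..T, Real.exp u * f u) + κ * Real.exp (T + κ) * (-Real.log δ₀) := by
  set C : ℝ := -Real.log δ₀ with hCdef
  set f' : ℝ → ℝ := fun u => if 0 ≤ u then f u else 0 with hf'def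
  have hf'eq : ∀ u, 0 ≤ u → f' u = f u := fun u hu => if_pos hu
  have hf'nn : ∀ u, 0 ≤ f' u := by
    intro u
    by_cases hu : 0 ≤ u
    · rw [hf'eq u hu]
      by_cases huT : u ≤ T
      · exact (hf u ⟨hu, huT⟩).1
      · rw [hext u (lt_of_not_ge huT)]; exact hC.le
    · simp [hf'def, hu]
  have hf'le : ∀ u, f' u ≤ C := by
    intro u
    by_cases hu : 0 ≤ u
    · rw [hf'eq u hu]
      by_cases huT : u ≤ T
      · exact (hf u ⟨hu, huT⟩).2
      · rw [hext u (lt_of_not_ge huT)]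
    · simp only [hf'def, if_neg hu]; exact hC.le
  have hf'abs : ∀ u, |f' u| ≤ C := fun u => abs_le.2 ⟨by linarith [hf'nn u, hC], hf'le u⟩
  have hf'meas : Measurable f' := by
    apply Measurable.ite _ hmeas measurable_const
    exact measurableSet_Ici
  set g : ℝ → ℝ := fun u => Real.exp u * f' u with hgdef
  have hgmeas : Measurable g := (Real.measurable_exp.comp measurable_id).mul hf'meas
  have hf'I : ∀ a b : ℝ, IntervalIntegrable f' volume a b := fun a b =>
    II_aux f' hf'meas a b C fun u _ => hf'abs u
  have hgI : ∀ a b : ℝ, IntervalIntegrable g volume a b := by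
    intro a b
    refine II_aux g hgmeas a b (Real.exp (max a b) * C) fun u hu => ?_
    have hu' : u ≤ max a b := hu.2
    have h1 : |g u| = Real.exp u * |f' u| := by
      rw [hgdef]; rw [abs_mul, abs_of_pos (Real.exp_pos u)]
    rw [h1]
    exact mul_le_mul (Real.exp_le_exp.2 hu') (hf'abs u) (abs_nonneg _) (Real.exp_pos _).le
  have hgnn : ∀ u, 0 ≤ g u := fun u => mul_nonneg (Real.exp_pos u).le (hf'nn u)
  set F : ℝ → ℝ := fun x => ∫ u in (0:ℝ)..x, f' u with hFdef
  set G : ℝ → ℝ := fun x => ∫ u in (0:ℝ)..x, g u with hGdef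
  have hFcont : Continuous F := intervalIntegral.continuous_primitive hf'I 0
  have hGcont : Continuous G := intervalIntegral.continuous_primitive hgI 0
  have hFsub : ∀ a b : ℝ, F b - F a = ∫ u in a..b, f' u := fun a b =>
    intervalIntegral.integral_interval_sub_left (hf'I 0 b) (hf'I 0 a)
  have hGsub : ∀ a b : ℝ, G b - G a = ∫ u in a..b, g u := fun a b =>
    intervalIntegral.integral_interval_sub_left (hgI 0 b) (hgI 0 a)
  have hGmono : ∀ a b : ℝ, a ≤ b → G a ≤ G b := by
    intro a b hab
    have : 0 ≤ G b - G a := by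
      rw [hGsub a b]
      exact intervalIntegral.integral_nonneg hab fun u _ => hgnn u
    linarith
  have hκinv : (0:ℝ) ≤ κ⁻¹ := (inv_pos.2 hκ0).le
  -- Step 1: rewrite the LHS using F
  have h1 : (∫ s in (0:ℝ)..T, Real.exp s * (κ⁻¹ * ∫ u in s..(s + κ), f u)) =
      ∫ s in (0:ℝ)..T, Real.exp s * (κ⁻¹ * (F (s + κ) - F s)) := by
    apply intervalIntegral.integral_congr
    intro s hs
    rw [Set.uIcc_of_le hT] at hs
    have hs0 : 0 ≤ s := hs.1
    have hinner : (∫ u in s..(s + κ), f u) = F (s + κ) - F s := by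
      rw [hFsub s (s + κ)]
      apply intervalIntegral.integral_congr
      intro u hu
      rw [Set.uIcc_of_le (by linarith : s ≤ s + κ)] at hu
      exact (hf'eq u (by linarith [hu.1])).symm
    dsimp only
    rw [hinner]
  rw [h1]
  -- Step 2: pointwise bound and monotonicity of the integral
  have h2 : (∫ s in (0:ℝ)..T, Real.exp s * (κ⁻¹ * (F (s + κ) - F s))) ≤
      ∫ s in (0:ℝ)..T, κ⁻¹ * (G (s + κ) - G s) := by
    apply intervalIntegral.integral_mono_on hT
    · exact (((Real.continuous_exp).mul (continuous_const.mul
        ((hFcont.comp (continuous_id.add continuous_const)).sub hFcont)))).intervalIntegrable 0 T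
    · exact (continuous_const.mul
        ((hGcont.comp (continuous_id.add continuous_const)).sub hGcont)).intervalIntegrable 0 T
    · intro s hs
      have hs0 : 0 ≤ s := hs.1
      have key : Real.exp s * (F (s + κ) - F s) ≤ G (s + κ) - G s := by
        rw [hFsub s (s + κ), hGsub s (s + κ),
          ← intervalIntegral.integral_const_mul]
        apply intervalIntegral.integral_mono_on (by linarith : s ≤ s + κ)
        · exact (hf'I s (s + κ)).const_mul _
        · exact hgI s (s + κ)
        · intro u hu
          exact mul_le_mul_of_nonneg_right (Real.exp_le_exp.2 hu.1) (hf'nn u)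
      calc Real.exp s * (κ⁻¹ * (F (s + κ) - F s))
          = κ⁻¹ * (Real.exp s * (F (s + κ) - F s)) := by ring
        _ ≤ κ⁻¹ * (G (s + κ) - G s) := mul_le_mul_of_nonneg_left key hκinv
  refine h2.trans ?_
  -- Step 3: compute the integral of G(s+κ) - G(s)
  have hGshiftI : IntervalIntegrable (fun s => G (s + κ)) volume 0 T :=
    (hGcont.comp (continuous_id.add continuous_const)).intervalIntegrable 0 T
  have hGI : IntervalIntegrable G volume 0 T := hGcont.intervalIntegrable 0 T
  have h3 : (∫ s in (0:ℝ)..T, κ⁻¹ * (G (s + κ) - G s)) =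
      κ⁻¹ * ((∫ s in κ..(T + κ), G s) - ∫ s in (0:ℝ)..T, G s) := by
    rw [intervalIntegral.integral_const_mul, intervalIntegral.integral_sub hGshiftI hGI]
    congr 1
    have := intervalIntegral.integral_comp_add_right (a := (0:ℝ)) (b := T) (d := κ) G
    rw [this, zero_add]
  rw [h3]
  -- Step 4: Chasles
  have hch1 : (∫ s in (0:ℝ)..κ, G s) + (∫ s in κ..(T + κ), G s) = ∫ s in (0:ℝ)..(T + κ), G s :=
    intervalIntegral.integral_add_adjacent_intervals (hGcont.intervalIntegrable 0 κ)
      (hGcont.intervalIntegrable κ (T + κ))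
  have hch2 : (∫ s in (0:ℝ)..T, G s) + (∫ s in T..(T + κ), G s) = ∫ s in (0:ℝ)..(T + κ), G s :=
    intervalIntegral.integral_add_adjacent_intervals hGI (hGcont.intervalIntegrable T (T + κ))
  have h0κ : (0:ℝ) ≤ ∫ s in (0:ℝ)..κ, G s := by
    apply intervalIntegral.integral_nonneg hκ0.le
    intro s hs
    have : G 0 ≤ G s := hGmono 0 s hs.1
    have hG0 : G 0 = 0 := intervalIntegral.integral_same
    linarith
  have hTT : (∫ s in T..(T + κ), G s) ≤ κ * G (T + κ) := by
    have : (∫ s in T..(T + κ), G s) ≤ ∫ _ in T..(T + κ), G (T + κ) := by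
      apply intervalIntegral.integral_mono_on (by linarith : T ≤ T + κ)
        (hGcont.intervalIntegrable T (T + κ)) (intervalIntegrable_const)
      intro s hs
      exact hGmono s (T + κ) hs.2
    simpa using this
  have h4 : κ⁻¹ * ((∫ s in κ..(T + κ), G s) - ∫ s in (0:ℝ)..T, G s) ≤ G (T + κ) := by
    have hdiff : (∫ s in κ..(T + κ), G s) - (∫ s in (0:ℝ)..T, G s) ≤ κ * G (T + κ) := by
      have : (∫ s in κ..(T + κ), G s) - (∫ s in (0:ℝ)..T, G s) =
          (∫ s in T..(T + κ), G s) - (∫ s in (0:ℝ)..κ, G s) := by linarith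
      rw [this]; linarith
    calc κ⁻¹ * ((∫ s in κ..(T + κ), G s) - ∫ s in (0:ℝ)..T, G s)
        ≤ κ⁻¹ * (κ * G (T + κ)) := mul_le_mul_of_nonneg_left hdiff hκinv
      _ = G (T + κ) := by field_simp
  refine h4.trans ?_
  -- Step 5: bound G(T+κ)
  have hGT : G T = ∫ u in (0:ℝ)..T, Real.exp u * f u := by
    apply intervalIntegral.integral_congr
    intro u hu
    rw [Set.uIcc_of_le hT] at hu
    rw [hgdef]
    simp only []
    rw [hf'eq u hu.1]
  have htail : (∫ u in T..(T + κ), g u) ≤ κ * Real.exp (T + κ) * C := by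
    have : (∫ u in T..(T + κ), g u) ≤ ∫ _ in T..(T + κ), Real.exp (T + κ) * C := by
      apply intervalIntegral.integral_mono_on (by linarith : T ≤ T + κ)
        (hgI T (T + κ)) intervalIntegrable_const
      intro u hu
      exact mul_le_mul (Real.exp_le_exp.2 hu.2) (hf'le u) (hf'nn u) (Real.exp_pos _).le
    have h' : (∫ _ in T..(T + κ), Real.exp (T + κ) * C) = κ * Real.exp (T + κ) * C := by
      simp; ring
    linarith
  have hsplit : G (T + κ) = G T + ∫ u in T..(T + κ), g u := by
    have := hGsub T (T + κ)
    linarith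
  rw [hsplit, hGT]
  linarith
end
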